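/- The encrypted state has the explicit component formula Ψ_enc(k̃, s, t) = d^(−(n+2)/2) · Σ_{a=0}^{d−1} Σ_{b=0}^{d−1} φ(a,b)⁻¹ · τ^((n+1)·a·b) · ψ(k̃ − a) · ω^(b · r) · ∏_{i : Fin n} [s i = t i − a], where r is the canonical representative (val) in ZMod d of (k̃ − a − Σ_{i} t i), the bracket [·] is 1 if the equality holds in ZMod d and 0 otherwise, and a is cast into ZMod d where subtracted. -/

import Mathlib

open Matrix Complex BigOperators
open scoped Kronecker

noncomputable section

/-- `ω = exp(2πi/d)`, the primitive `d`-th root of unity. -/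
def ω (d : ℕ) : ℂ := Complex.exp (2 * Real.pi * Complex.I / d)

/-- `τ = exp(πi(d+1)/d)`, so that `τ² = ω`. -/
def τ (d : ℕ) : ℂ := Complex.exp (Real.pi * Complex.I * (d + 1) / d)

/-- The clock matrix `Z`, diagonal with entries `ω^(j.val)`. -/
def Zmat (d : ℕ) : Matrix (ZMod d) (ZMod d) ℂ :=
  Matrix.diagonal fun j => ω d ^ (j.val)

/-- The shift matrix `X`, with `X j k = 1` iff `j = k + 1` in `ZMod d`. -/
def Xmat (d : ℕ) : Matrix (ZMod d) (ZMod d) ℂ :=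
  Matrix.of fun j k => if j = k + 1 then 1 else 0

lemma omega_ne_zero (d : ℕ) : ω d ≠ 0 := Complex.exp_ne_zero _

/-- The clock matrix as an invertible matrix (a unit of the matrix ring). -/
def Zu (d : ℕ) [NeZero d] : (Matrix (ZMod d) (ZMod d) ℂ)ˣ where
  val := Zmat d
  inv := Matrix.diagonal fun j => (ω d ^ (j.val))⁻¹
  val_inv := by
    rw [Zmat, Matrix.diagonal_mul_diagonal]
    have h : (fun j : ZMod d => ω d ^ j.val * (ω d ^ j.val)⁻¹) = fun _ => 1 := by
      funext j; exact mul_inv_cancel₀ (pow_ne_zero _ (omega_ne_zero d))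
    rw [h, Matrix.diagonal_one]
  inv_val := by
    rw [Zmat, Matrix.diagonal_mul_diagonal]
    have h : (fun j : ZMod d => (ω d ^ j.val)⁻¹ * ω d ^ j.val) = fun _ => 1 := by
      funext j; exact inv_mul_cancel₀ (pow_ne_zero _ (omega_ne_zero d))
    rw [h, Matrix.diagonal_one]

lemma Xmat_mul_transpose (d : ℕ) [NeZero d] : Xmat d * (Xmat d)ᵀ = 1 := by
  ext i j
  simp only [Matrix.mul_apply, Matrix.transpose_apply, Xmat, Matrix.of_apply,
    Matrix.one_apply, ite_mul, one_mul, zero_mul]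
  have h : ∀ m : ZMod d,
      (if i = m + 1 then (if j = m + 1 then (1:ℂ) else 0) else 0)
        = (if m = i - 1 then (if j = m + 1 then (1:ℂ) else 0) else 0) := by
    intro m
    by_cases hm : i = m + 1
    · have hm' : m = i - 1 := by rw [hm]; ring
      rw [if_pos hm, if_pos hm']
    · have hm' : ¬ m = i - 1 := fun h' => hm (by rw [h']; ring)
      rw [if_neg hm, if_neg hm']
  rw [Finset.sum_congr rfl fun m _ => h m, Finset.sum_ite_eq' Finset.univ (i - 1)]
  simp only [Finset.mem_univ, if_true, sub_add_cancel]
  by_cases hij : i = j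
  · subst hij; simp
  · rw [if_neg (fun h' => hij h'.symm), if_neg hij]

/-- The shift matrix as an invertible matrix (a unit of the matrix ring). -/
def Xu (d : ℕ) [NeZero d] : (Matrix (ZMod d) (ZMod d) ℂ)ˣ :=
  ⟨Xmat d, (Xmat d)ᵀ, Xmat_mul_transpose d,
    mul_eq_one_comm.mp (Xmat_mul_transpose d)⟩

/-- The Weyl–Heisenberg displacement operator `W(a,b) = τ^(ab) • X^a * Z^b`,
where `X^a`, `Z^b` are integer (`zpow`) powers of the invertible matrices `X`, `Z`. -/
def Wop (d : ℕ) [NeZero d] (a b : ℤ) : Matrix (ZMod d) (ZMod d) ℂ :=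
  τ d ^ (a * b) •
    (((Xu d ^ a : (Matrix (ZMod d) (ZMod d) ℂ)ˣ) : Matrix (ZMod d) (ZMod d) ℂ) *
      ((Zu d ^ b : (Matrix (ZMod d) (ZMod d) ℂ)ˣ) : Matrix (ZMod d) (ZMod d) ℂ))

/-- The maximally entangled vector `Φ(j,k) = 1/√d` if `j = k`, else `0`. -/
def MES (d : ℕ) : ZMod d × ZMod d → ℂ :=
  fun p => if p.1 = p.2 then ((1 / Real.sqrt d : ℝ) : ℂ) else 0

/-- The generalized Bell vector `B(a,b)(s,t) = ω^(−b·t.val)/√d` if `s = t − a`, else `0`. -/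
def Bell (d : ℕ) (a b : ℤ) : ZMod d × ZMod d → ℂ :=
  fun p => if p.1 = p.2 - (a : ZMod d)
    then ω d ^ (-(b * (p.2.val : ℤ))) / ((Real.sqrt d : ℝ) : ℂ) else 0

/-- The phase `φ(a,b) = τ^(−(a² + b² − (n+1)·a·b))`. -/
def φcoef (d n : ℕ) (a b : ℤ) : ℂ :=
  τ d ^ (-(a ^ 2 + b ^ 2 - ((n : ℤ) + 1) * a * b))

/-- The encryption operator `U_enc`. -/
def Uenc (d n : ℕ) [NeZero d] :
    Matrix (ZMod d × (Fin n → ZMod d)) (ZMod d × (Fin n → ZMod d)) ℂ :=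
  Matrix.of fun p q => (1 / (d : ℂ)) *
    ∑ a ∈ Finset.range d, ∑ b ∈ Finset.range d,
      (φcoef d n a b)⁻¹ * Wop d a b p.1 q.1 *
        ∏ i, (Wop d a b)ᴴ (p.2 i) (q.2 i)

/-- The decryption operator `U_dec` for decrypting the `l`-th signal qudit. -/
def Udec (d n : ℕ) [NeZero d] (l : Fin n) :
    Matrix (ZMod d × (Fin n → ZMod d)) (ZMod d × (Fin n → ZMod d)) ℂ :=
  Matrix.of fun p q =>
    ∑ a ∈ Finset.range d, ∑ b ∈ Finset.range d,
      φcoef d n a b * Bell d a b (p.1, p.2 l) *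
        (starRingEnd ℂ) (Bell d a b (q.1, q.2 l)) *
        ∏ i ∈ Finset.univ.erase l, (Wop d a b)ᵀ (p.2 i) (q.2 i)

/-- The initial global state `Ψ₀(k,s,t) = ψ(k)·d^(−n/2)` if `s = t`, else `0`. -/
def Ψinit (d n : ℕ) (ψ : ZMod d → ℂ) :
    ZMod d × (Fin n → ZMod d) × (Fin n → ZMod d) → ℂ :=
  fun p => if p.2.1 = p.2.2 then ψ p.1 * (((d : ℝ) ^ (-(n : ℝ) / 2) : ℝ) : ℂ) else 0

/-- The encrypted global state `Ψ_enc = U_enc Ψ₀` (U_enc acting on A and the signals). -/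
def Ψenc (d n : ℕ) [NeZero d] (ψ : ZMod d → ℂ) :
    ZMod d × (Fin n → ZMod d) × (Fin n → ZMod d) → ℂ :=
  fun p => ∑ k' : ZMod d, ∑ s' : Fin n → ZMod d,
    Uenc d n (p.1, p.2.1) (k', s') * Ψinit d n ψ (k', s', p.2.2)

/-- Assemble a function `Fin n → α` from a value `u` at index `i₀` and values `g`
on the remaining indices. -/
def insVal {α : Type*} {n : ℕ} (i₀ : Fin n) (u : α) (g : {i : Fin n // i ≠ i₀} → α) :
    Fin n → α :=
  fun i => if h : i = i₀ then u else g ⟨i, h⟩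


lemma omega_ne_zero' (d : ℕ) : ω d ≠ 0 := Complex.exp_ne_zero _
lemma tau_ne_zero (d : ℕ) : τ d ≠ 0 := Complex.exp_ne_zero _

lemma omega_zpow (d : ℕ) (m : ℤ) : ω d ^ m = Complex.exp (2 * Real.pi * Complex.I * m / d) := by
  rw [ω, ← Complex.exp_int_mul]; ring_nf

lemma tau_zpow (d : ℕ) (m : ℤ) : τ d ^ m = Complex.exp (Real.pi * Complex.I * (d + 1) * m / d) := by
  rw [τ, ← Complex.exp_int_mul]; ring_nf

lemma tau_sq (d : ℕ) [NeZero d] : τ d ^ (2:ℤ) = ω d := by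
  have hd : (d:ℂ) ≠ 0 := Nat.cast_ne_zero.mpr (NeZero.ne d)
  rw [tau_zpow, ω]
  rw [show (Real.pi : ℂ) * Complex.I * (d + 1) * (2:ℤ) / d
      = 2 * Real.pi * Complex.I + 2 * Real.pi * Complex.I / d by field_simp; ring]
  rw [Complex.exp_add, Complex.exp_two_pi_mul_I, one_mul]

lemma omega_pow_d (d : ℕ) [NeZero d] : ω d ^ (d:ℤ) = 1 := by
  have hd : (d:ℂ) ≠ 0 := Nat.cast_ne_zero.mpr (NeZero.ne d)
  rw [omega_zpow, show 2 * (Real.pi:ℂ) * Complex.I * (d:ℤ) / d = 2 * Real.pi * Complex.I by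
    push_cast; field_simp]
  exact Complex.exp_two_pi_mul_I

lemma omega_zpow_congr (d : ℕ) [NeZero d] {m m' : ℤ} (h : (m : ZMod d) = (m' : ZMod d)) :
    ω d ^ m = ω d ^ m' := by
  obtain ⟨q, hq⟩ : (d:ℤ) ∣ (m - m') := by
    have := (ZMod.intCast_zmod_eq_zero_iff_dvd (m - m') d).mp (by push_cast; rw [h]; ring)
    exact_mod_cast this
  have : m = m' + d * q := by linarith [hq]
  rw [this, zpow_add₀ (omega_ne_zero' d), _root_.zpow_mul, omega_pow_d, _root_.one_zpow, mul_one]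

lemma conj_tau (d : ℕ) : (starRingEnd ℂ) (τ d) = (τ d)⁻¹ := by
  rw [τ, ← Complex.exp_conj, ← Complex.exp_neg]
  congr 1
  simp only [map_div₀, _root_.map_mul, Complex.conj_I, map_ofNat, Complex.conj_ofReal,
    map_add, _root_.map_one, Complex.conj_natCast]
  ring

lemma conj_tau_zpow (d : ℕ) (m : ℤ) : (starRingEnd ℂ) (τ d ^ m) = τ d ^ (-m) := by
  rw [map_zpow₀, conj_tau, _root_.inv_zpow, ← _root_.zpow_neg]

lemma conj_omega (d : ℕ) : (starRingEnd ℂ) (ω d) = (ω d)⁻¹ := by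
  rw [ω, ← Complex.exp_conj, ← Complex.exp_neg]
  congr 1
  simp only [map_div₀, _root_.map_mul, Complex.conj_I, map_ofNat, Complex.conj_ofReal,
    map_add, _root_.map_one, Complex.conj_natCast]
  ring

lemma conj_omega_zpow (d : ℕ) (m : ℤ) : (starRingEnd ℂ) (ω d ^ m) = ω d ^ (-m) := by
  rw [map_zpow₀, conj_omega, _root_.inv_zpow, ← _root_.zpow_neg]

lemma zpow_sum₀ {x : ℂ} (hx : x ≠ 0) {ι : Type*} (S : Finset ι) (f : ι → ℤ) :
    x ^ (∑ i ∈ S, f i) = ∏ i ∈ S, x ^ f i := by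
  classical
  induction S using Finset.induction with
  | empty => simp
  | @insert a s ha ih => rw [Finset.sum_insert ha, Finset.prod_insert ha,
      zpow_add₀ hx, ih]

lemma Xu_pow_apply (d : ℕ) [NeZero d] (a : ℕ) (j k : ZMod d) :
    ((Xu d ^ (a:ℤ) : (Matrix (ZMod d) (ZMod d) ℂ)ˣ) : Matrix (ZMod d) (ZMod d) ℂ) j k
      = if j = k + (a : ZMod d) then 1 else 0 := by
  rw [zpow_natCast, Units.val_pow_eq_pow_val]
  induction a generalizing k with
  | zero => simp [Matrix.one_apply, eq_comm]
  | succ m ih =>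
      rw [pow_succ, Matrix.mul_apply]
      have : ∀ l : ZMod d, ((Xu d).val ^ m) j l * (Xu d).val l k
          = if l = k + 1 then ((Xu d).val ^ m) j l else 0 := by
        intro l
        simp only [Xu, Xmat, Matrix.of_apply]
        by_cases h : l = k + 1 <;> simp [h]
      rw [Finset.sum_congr rfl fun l _ => this l, Finset.sum_ite_eq' Finset.univ (k+1)]
      simp only [Finset.mem_univ, if_true]
      rw [ih (k+1)]
      have : (k + 1 + (m : ZMod d)) = k + ((m:ℕ)+1 : ℕ) := by push_cast; ring
      rw [this]

lemma Zu_zpow_apply (d : ℕ) [NeZero d] (b : ℕ) (j k : ZMod d) :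
    ((Zu d ^ (b:ℤ) : (Matrix (ZMod d) (ZMod d) ℂ)ˣ) : Matrix (ZMod d) (ZMod d) ℂ) j k
      = if j = k then ω d ^ ((k.val : ℤ) * b) else 0 := by
  rw [zpow_natCast, Units.val_pow_eq_pow_val]
  show ((Zmat d) ^ b) j k = _
  rw [Zmat, Matrix.diagonal_pow, Matrix.diagonal_apply]
  by_cases h : j = k
  · subst h
    rw [if_pos rfl, if_pos rfl, Pi.pow_apply, ← zpow_natCast (ω d) j.val, ← zpow_natCast (ω d ^ ((j.val:ℤ))) b, ← _root_.zpow_mul]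
  · rw [if_neg h, if_neg h]

lemma Wop_apply' (d : ℕ) [NeZero d] (a b : ℕ) (j k : ZMod d) :
    Wop d a b j k = if j = k + (a : ZMod d)
      then τ d ^ ((a:ℤ) * b) * ω d ^ ((k.val : ℤ) * b) else 0 := by
  rw [Wop, Matrix.smul_apply, Matrix.mul_apply]
  have : ∀ l : ZMod d,
      ((Xu d ^ (a:ℤ) : (Matrix (ZMod d) (ZMod d) ℂ)ˣ) : Matrix (ZMod d) (ZMod d) ℂ) j l *
        ((Zu d ^ (b:ℤ) : (Matrix (ZMod d) (ZMod d) ℂ)ˣ) : Matrix (ZMod d) (ZMod d) ℂ) l k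
      = if l = k then (if j = k + (a:ZMod d) then ω d ^ ((k.val : ℤ) * b) else 0) else 0 := by
    intro l
    rw [Xu_pow_apply, Zu_zpow_apply]
    by_cases h : l = k <;> by_cases h2 : j = k + (a:ZMod d) <;> simp [h, h2]
  rw [Finset.sum_congr rfl fun l _ => this l, Finset.sum_ite_eq' Finset.univ k]
  simp only [Finset.mem_univ, if_true, smul_eq_mul]
  by_cases h2 : j = k + (a:ZMod d) <;> simp [h2]

lemma Wop_conjT_apply (d : ℕ) [NeZero d] (a b : ℕ) (j k : ZMod d) :
    (Wop d a b)ᴴ j k = if j = k - (a : ZMod d)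
      then τ d ^ (-((a:ℤ) * b)) * ω d ^ (-((j.val : ℤ) * b)) else 0 := by
  rw [Matrix.conjTranspose_apply, Wop_apply']
  have hiff : k = j + (a:ZMod d) ↔ j = k - (a:ZMod d) := by
    constructor <;> intro h <;> rw [h] <;> ring
  by_cases h : j = k - (a:ZMod d)
  · rw [if_pos (hiff.mpr h), if_pos h, star_mul']
    rw [show star (τ d ^ ((a:ℤ)*(b:ℤ))) = τ d ^ (-((a:ℤ)*(b:ℤ))) from conj_tau_zpow d _,
        show star (ω d ^ ((j.val:ℤ)*(b:ℤ))) = ω d ^ (-((j.val:ℤ)*(b:ℤ))) from conj_omega_zpow d _]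
  · rw [if_neg (fun hh => h (hiff.mp hh)), if_neg h, star_zero]


lemma val_intCast_cast (d : ℕ) [NeZero d] (x : ZMod d) : (((x.val:ℕ):ℤ) : ZMod d) = x := by
  push_cast
  simp [ZMod.natCast_val, ZMod.cast_id]

lemma val_natCast_cast (d : ℕ) [NeZero d] (x : ZMod d) : ((x.val:ℕ) : ZMod d) = x := by
  simp [ZMod.natCast_val, ZMod.cast_id]


/-- explicit component formula for the encrypted state. -/
theorem Psienc_explicit_formula (d n : ℕ) [NeZero d] (hd : 2 ≤ d) (hn : 1 ≤ n)
    (ψ : ZMod d → ℂ) (k : ZMod d) (s t : Fin n → ZMod d) :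
    Ψenc d n ψ (k, s, t)
      = (((d : ℝ) ^ (-((n : ℝ) + 2) / 2) : ℝ) : ℂ) *
        ∑ a ∈ Finset.range d, ∑ b ∈ Finset.range d,
          (φcoef d n a b)⁻¹ * τ d ^ (((n : ℤ) + 1) * (a : ℤ) * (b : ℤ)) *
            ψ (k - (a : ZMod d)) *
            ω d ^ ((b : ℤ) * (((k - (a : ZMod d) - ∑ i, t i).val : ℕ) : ℤ)) *
            ∏ i, (if s i = t i - (a : ZMod d) then (1 : ℂ) else 0) := by
  classical
  have hdC : (d:ℂ) ≠ 0 := Nat.cast_ne_zero.mpr (NeZero.ne d)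
  set D : ℂ := (((d : ℝ) ^ (-(n : ℝ) / 2) : ℝ) : ℂ) with hDdef
  have h1 : Ψenc d n ψ (k, s, t)
      = ∑ k' : ZMod d, Uenc d n (k, s) (k', t) * (ψ k' * D) := by
    rw [Ψenc]
    refine Finset.sum_congr rfl fun k' _ => ?_
    simp only [Ψinit]
    rw [Finset.sum_eq_single t]
    · simp [hDdef]
    · intro s' _ hs'; simp [hs']
    · intro h; exact absurd (Finset.mem_univ t) h
  have h2 : (∑ k' : ZMod d, Uenc d n (k, s) (k', t) * (ψ k' * D))
      = ∑ a ∈ Finset.range d, ∑ b ∈ Finset.range d, ∑ k' : ZMod d,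
          (1/(d:ℂ)) * ((φcoef d n a b)⁻¹ * Wop d a b k k' *
            (∏ i, (Wop d a b)ᴴ (s i) (t i)) * (ψ k' * D)) := by
    have e1 : ∀ k' : ZMod d, Uenc d n (k, s) (k', t) * (ψ k' * D)
        = ∑ a ∈ Finset.range d, ∑ b ∈ Finset.range d,
            (1/(d:ℂ)) * ((φcoef d n a b)⁻¹ * Wop d a b k k' *
              (∏ i, (Wop d a b)ᴴ (s i) (t i)) * (ψ k' * D)) := by
      intro k'
      simp only [Uenc, Matrix.of_apply]
      rw [Finset.mul_sum, Finset.sum_mul]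
      refine Finset.sum_congr rfl fun a _ => ?_
      rw [Finset.mul_sum, Finset.sum_mul]
      refine Finset.sum_congr rfl fun b _ => by ring
    rw [Finset.sum_congr rfl fun k' _ => e1 k', Finset.sum_comm]
    refine Finset.sum_congr rfl fun a _ => ?_
    rw [Finset.sum_comm]
  have key : ∀ a b : ℕ,
      (∑ k' : ZMod d, (φcoef d n a b)⁻¹ * Wop d a b k k' *
          (∏ i, (Wop d a b)ᴴ (s i) (t i)) * (ψ k' * D))
      = ((φcoef d n a b)⁻¹ * τ d ^ (((n : ℤ) + 1) * (a : ℤ) * (b : ℤ)) *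
          ψ (k - (a : ZMod d)) *
          ω d ^ ((b : ℤ) * (((k - (a : ZMod d) - ∑ i, t i).val : ℕ) : ℤ)) *
          ∏ i, (if s i = t i - (a : ZMod d) then (1 : ℂ) else 0)) * D := by
    intro a b
    have hcol : ∀ k' : ZMod d,
        (φcoef d n a b)⁻¹ * Wop d a b k k' * (∏ i, (Wop d a b)ᴴ (s i) (t i)) * (ψ k' * D)
        = if k' = k - (a:ZMod d) then
            (φcoef d n a b)⁻¹ * (τ d ^ ((a:ℤ)*(b:ℤ)) * ω d ^ (((k'.val:ℕ):ℤ)*(b:ℤ))) *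
              (∏ i, (Wop d a b)ᴴ (s i) (t i)) * (ψ k' * D) else 0 := by
      intro k'
      rw [Wop_apply']
      have hiff : (k = k' + (a:ZMod d)) ↔ (k' = k - (a:ZMod d)) := by
        constructor <;> intro h <;> rw [h] <;> ring
      by_cases h : k' = k - (a:ZMod d)
      · rw [if_pos (hiff.mpr h), if_pos h]
      · rw [if_neg (fun hh => h (hiff.mp hh)), if_neg h]
        ring
    rw [Finset.sum_congr rfl fun k' _ => hcol k',
        Finset.sum_ite_eq' Finset.univ (k - (a:ZMod d))]
    simp only [Finset.mem_univ, if_true]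
    have hP : (∏ i, (Wop d a b)ᴴ (s i) (t i))
        = (∏ i, (if s i = t i - (a:ZMod d) then (1:ℂ) else 0)) *
          (τ d ^ ((-((a:ℤ)*(b:ℤ))) * (n:ℤ)) *
            ω d ^ (∑ i, -((((t i - (a:ZMod d)).val : ℕ):ℤ)*(b:ℤ)))) := by
      have hfac : ∀ i, (Wop d a b)ᴴ (s i) (t i)
          = (if s i = t i - (a:ZMod d) then (1:ℂ) else 0) *
            (τ d ^ (-((a:ℤ)*(b:ℤ))) *
              ω d ^ (-((((t i - (a:ZMod d)).val:ℕ):ℤ)*(b:ℤ)))) := by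
        intro i
        rw [Wop_conjT_apply]
        by_cases h : s i = t i - (a:ZMod d)
        · rw [if_pos h, if_pos h, one_mul, h]
        · rw [if_neg h, if_neg h, zero_mul]
      rw [Finset.prod_congr rfl fun i _ => hfac i, Finset.prod_mul_distrib,
          Finset.prod_mul_distrib, Finset.prod_const, Finset.card_univ, Fintype.card_fin,
          ← zpow_natCast (τ d ^ (-((a:ℤ)*(b:ℤ)))) n,
          ← _root_.zpow_mul (τ d) (-((a:ℤ)*(b:ℤ))) (n:ℤ),
          ← zpow_sum₀ (omega_ne_zero' d)]
    rw [hP]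
    have hphase : τ d ^ ((a:ℤ)*(b:ℤ)) * ω d ^ ((((k - (a:ZMod d)).val:ℕ):ℤ)*(b:ℤ)) *
          (τ d ^ ((-((a:ℤ)*(b:ℤ))) * (n:ℤ)) *
            ω d ^ (∑ i, -((((t i - (a:ZMod d)).val : ℕ):ℤ)*(b:ℤ))))
        = τ d ^ (((n:ℤ)+1)*(a:ℤ)*(b:ℤ)) *
          ω d ^ ((b:ℤ) * (((k - (a:ZMod d) - ∑ i, t i).val : ℕ):ℤ)) := by
      have hτ : τ d ^ (((n:ℤ)+1)*(a:ℤ)*(b:ℤ))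
          = τ d ^ ((a:ℤ)*(b:ℤ)) * τ d ^ ((-((a:ℤ)*(b:ℤ)))*(n:ℤ)) *
            ω d ^ ((n:ℤ)*(a:ℤ)*(b:ℤ)) := by
        rw [← tau_sq d, ← _root_.zpow_mul (τ d) 2 ((n:ℤ)*(a:ℤ)*(b:ℤ)),
            ← zpow_add₀ (tau_ne_zero d), ← zpow_add₀ (tau_ne_zero d)]
        congr 1
        ring
      have hω : ω d ^ ((((k - (a:ZMod d)).val:ℕ):ℤ)*(b:ℤ) +
            ∑ i, -((((t i - (a:ZMod d)).val:ℕ):ℤ)*(b:ℤ)))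
          = ω d ^ ((n:ℤ)*(a:ℤ)*(b:ℤ) +
              (b:ℤ)*(((k - (a:ZMod d) - ∑ i, t i).val:ℕ):ℤ)) := by
        apply omega_zpow_congr
        push_cast [val_intCast_cast, val_natCast_cast]
        have hsum : (∑ i : Fin n, -((t i - (a:ZMod d)) * (b:ZMod d)))
            = -(((∑ i, t i) - (n:ZMod d) * (a:ZMod d)) * (b:ZMod d)) := by
          rw [Finset.sum_neg_distrib, ← Finset.sum_mul, Finset.sum_sub_distrib,
              Finset.sum_const, Finset.card_univ, Fintype.card_fin, nsmul_eq_mul]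
        rw [hsum]
        ring
      rw [mul_mul_mul_comm, ← zpow_add₀ (omega_ne_zero' d), hω,
          zpow_add₀ (omega_ne_zero' d), hτ]
      ring
    linear_combination ((φcoef d n a b)⁻¹ *
      (∏ i, (if s i = t i - (a:ZMod d) then (1:ℂ) else 0)) * ψ (k - (a:ZMod d)) * D) * hphase
  rw [h1, h2]
  have hC : (((d : ℝ) ^ (-((n : ℝ) + 2) / 2) : ℝ) : ℂ) = (1/(d:ℂ)) * D := by
    have hd0 : (0:ℝ) < d := by positivity
    rw [hDdef, show (-((n : ℝ) + 2) / 2) = (-(n:ℝ)/2) + (-1 : ℝ) by ring,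
        Real.rpow_add hd0, Real.rpow_neg_one]
    push_cast
    field_simp
  rw [Finset.mul_sum]
  refine Finset.sum_congr rfl fun a _ => ?_
  rw [Finset.mul_sum]
  refine Finset.sum_congr rfl fun b _ => ?_
  rw [← Finset.mul_sum, key a b, hC]
  ring


end
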